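/- Training concentration of the exponential-weights proxy (Theorem 1): let Π be a countable type, p₀ : Π → ℝ a probability mass function, η > 0, Δ : Π → [0,1], and for each k ≥ 1 let Δ̂_k : Π → [0,1]. Let G ⊆ Π be a subset (the training good region) with p₀(G) > 0, and let τ_good ∈ (0,1), Δ_bad ∈ [0,1] satisfy: Δ(π) ≥ τ_good for every π ∈ G, Δ(π) ≤ Δ_bad for every π ∈ Π \ G, and γ := τ_good − Δ_bad > 0. For K ≥ 1 define p_K(π) = p₀(π)·exp(η·∑_{k=1}^K Δ̂_k(π)) / ∑_{π'} p₀(π')·exp(η·∑_{k=1}^K Δ̂_k(π')). Suppose that for every π with p₀(π) > 0, |∑_{k=1}^K (Δ̂_k(π) − Δ(π))| ≤ ε_K. Define ρ_K := (p₀(Π \ G)/p₀(G))·exp(−η·(K·γ − 2·ε_K)). Then: (i) p_K(Π \ G)/p_K(G) ≤ ρ_K; (ii) p_K(G) ≥ 1/(1 + ρ_K); and (iii) p_K(Π \ G) ≤ ρ_K/(1 + ρ_K). -/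

import Mathlib

lemma aux_ratio {Pol : Type*} (p₀ w : Pol → ℝ) (hp₀0 : ∀ π, 0 ≤ p₀ π) (hp₀s : Summable p₀)
    (hw0 : ∀ π, 0 ≤ w π) (hws : Summable w)
    (Z : ℝ) (hZdef : Z = ∑' π, w π) (hZ1 : 1 ≤ Z)
    (G : Set Pol) (hb : 0 < ∑' π : G, p₀ π)
    (c₁ c₂ : ℝ) (hc₁ : 0 < c₁) (hc₂ : 0 ≤ c₂)
    (hlow : ∀ π ∈ G, c₁ * p₀ π ≤ w π) (hhigh : ∀ π ∉ G, w π ≤ c₂ * p₀ π)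
    (pK : Pol → ℝ) (hpK : ∀ π, pK π = w π / Z)
    (ρ : ℝ) (hρ : ρ = (c₂ * ∑' π : ↥Gᶜ, p₀ π) / (c₁ * ∑' π : G, p₀ π)) :
    (∑' π : ↥Gᶜ, pK π) / (∑' π : G, pK π) ≤ ρ ∧
    1 / (1 + ρ) ≤ (∑' π : G, pK π) ∧
    (∑' π : ↥Gᶜ, pK π) ≤ ρ / (1 + ρ) := by
  have hZpos : 0 < Z := lt_of_lt_of_le one_pos hZ1
  set A := ∑' π : ↥Gᶜ, w π with hA
  set B := ∑' π : G, w π with hB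
  set a := ∑' π : ↥Gᶜ, p₀ π with ha
  set b := ∑' π : G, p₀ π with hbdef
  have hwsG : Summable (fun π : G => w π) := hws.subtype G
  have hwsGc : Summable (fun π : ↥Gᶜ => w π) := hws.subtype Gᶜ
  have hpsG : Summable (fun π : G => p₀ π) := hp₀s.subtype G
  have hpsGc : Summable (fun π : ↥Gᶜ => p₀ π) := hp₀s.subtype Gᶜ
  have ha0 : 0 ≤ a := tsum_nonneg fun π => hp₀0 π
  have hA0 : 0 ≤ A := tsum_nonneg fun π => hw0 π
  have hAle : A ≤ c₂ * a := by
    calc A ≤ ∑' π : ↥Gᶜ, c₂ * p₀ π :=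
          Summable.tsum_le_tsum (fun π => hhigh π π.2) hwsGc (hpsGc.mul_left c₂)
      _ = c₂ * a := tsum_mul_left
  have hBge : c₁ * b ≤ B := by
    calc c₁ * b = ∑' π : G, c₁ * p₀ π := tsum_mul_left.symm
      _ ≤ B := Summable.tsum_le_tsum (fun π => hlow π π.2) (hpsG.mul_left c₁) hwsG
  have hBpos : 0 < B := lt_of_lt_of_le (mul_pos hc₁ hb) hBge
  have hratio : A / B ≤ ρ := by
    rw [hρ]
    exact div_le_div₀ (mul_nonneg hc₂ ha0) hAle (mul_pos hc₁ hb) hBge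
  have hρ0 : 0 ≤ ρ := le_trans (div_nonneg hA0 hBpos.le) hratio
  have hpKG : (∑' π : G, pK π) = B / Z := by
    simp only [hpK]; exact tsum_div_const
  have hpKGc : (∑' π : ↥Gᶜ, pK π) = A / Z := by
    simp only [hpK]; exact tsum_div_const
  have hsplit : B + A = Z := by
    rw [hZdef]
    exact Summable.tsum_add_tsum_compl hwsG hwsGc
  have h1ρ : 0 < 1 + ρ := by linarith
  have hi : (∑' π : ↥Gᶜ, pK π) / (∑' π : G, pK π) ≤ ρ := by
    rw [hpKG, hpKGc, div_div_div_cancel_right₀]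
    · exact hratio
    · exact hZpos.ne'
  have hsum1 : (∑' π : G, pK π) + (∑' π : ↥Gᶜ, pK π) = 1 := by
    rw [hpKG, hpKGc, ← add_div, hsplit, div_self hZpos.ne']
  have hpKGpos : 0 < (∑' π : G, pK π) := by rw [hpKG]; positivity
  have hrat2 : (∑' π : ↥Gᶜ, pK π) ≤ ρ * (∑' π : G, pK π) :=
    (div_le_iff₀ hpKGpos).1 hi
  have hii' : 1 ≤ (∑' π : G, pK π) * (1 + ρ) := by nlinarith
  refine ⟨hi, ?_, ?_⟩
  · rw [div_le_iff₀ h1ρ]; linarith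
  · rw [le_div_iff₀ h1ρ]; nlinarith

/-- Training concentration of the exponential-weights proxy (Theorem 1). -/
theorem stmt_3 {Pol : Type*} [Countable Pol]
    (p₀ : Pol → ℝ) (hp₀_nonneg : ∀ π, 0 ≤ p₀ π) (hp₀_sum : HasSum p₀ 1)
    (η : ℝ) (hη : 0 < η)
    (Δ : Pol → ℝ) (hΔ : ∀ π, Δ π ∈ Set.Icc (0 : ℝ) 1)
    (Δhat : ℕ → Pol → ℝ) (hΔhat : ∀ k π, Δhat k π ∈ Set.Icc (0 : ℝ) 1)
    (G : Set Pol) (hG : 0 < ∑' π : G, p₀ π)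
    (τgood Δbad : ℝ) (hτ : τgood ∈ Set.Ioo (0 : ℝ) 1) (hbad : Δbad ∈ Set.Icc (0 : ℝ) 1)
    (hΔG : ∀ π ∈ G, τgood ≤ Δ π) (hΔGc : ∀ π ∉ G, Δ π ≤ Δbad)
    (γ : ℝ) (hγ : γ = τgood - Δbad) (hγpos : 0 < γ)
    (K : ℕ) (hK : 1 ≤ K) (εK : ℝ)
    (herr : ∀ π, 0 < p₀ π →
      |∑ k ∈ Finset.Icc 1 K, (Δhat k π - Δ π)| ≤ εK)
    (pK : Pol → ℝ)
    (hpK : ∀ π, pK π =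
      p₀ π * Real.exp (η * ∑ k ∈ Finset.Icc 1 K, Δhat k π) /
        ∑' π' : Pol, p₀ π' * Real.exp (η * ∑ k ∈ Finset.Icc 1 K, Δhat k π'))
    (ρK : ℝ)
    (hρK : ρK = ((∑' π : ↥Gᶜ, p₀ π) / ∑' π : G, p₀ π) *
      Real.exp (-(η * ((K : ℝ) * γ - 2 * εK)))) :
    (∑' π : ↥Gᶜ, pK π) / (∑' π : G, pK π) ≤ ρK ∧
    1 / (1 + ρK) ≤ (∑' π : G, pK π) ∧
    (∑' π : ↥Gᶜ, pK π) ≤ ρK / (1 + ρK) := by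
  have hp₀s : Summable p₀ := hp₀_sum.summable
  set w : Pol → ℝ := fun π => p₀ π * Real.exp (η * ∑ k ∈ Finset.Icc 1 K, Δhat k π) with hw
  have hw0 : ∀ π, 0 ≤ w π := fun π => mul_nonneg (hp₀_nonneg π) (Real.exp_pos _).le
  have hSle : ∀ π, (∑ k ∈ Finset.Icc 1 K, Δhat k π) ≤ K := by
    intro π
    calc (∑ k ∈ Finset.Icc 1 K, Δhat k π) ≤ ∑ k ∈ Finset.Icc 1 K, (1 : ℝ) :=
        Finset.sum_le_sum fun k _ => (hΔhat k π).2
      _ = K := by simp [Nat.card_Icc]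
  have hS0 : ∀ π, 0 ≤ ∑ k ∈ Finset.Icc 1 K, Δhat k π :=
    fun π => Finset.sum_nonneg fun k _ => (hΔhat k π).1
  have hws : Summable w := by
    apply Summable.of_nonneg_of_le hw0 (fun π => ?_) (hp₀s.mul_right (Real.exp (η * K)))
    exact mul_le_mul_of_nonneg_left
      (Real.exp_le_exp.2 (mul_le_mul_of_nonneg_left (hSle π) hη.le)) (hp₀_nonneg π)
  have hZ1 : 1 ≤ ∑' π, w π := by
    rw [← hp₀_sum.tsum_eq]
    refine Summable.tsum_le_tsum (fun π => ?_) hp₀s hws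
    nth_rewrite 1 [← mul_one (p₀ π)]
    exact mul_le_mul_of_nonneg_left
      (Real.one_le_exp (mul_nonneg hη.le (hS0 π))) (hp₀_nonneg π)
  set c₁ : ℝ := Real.exp (η * ((K : ℝ) * τgood - εK)) with hc₁def
  set c₂ : ℝ := Real.exp (η * ((K : ℝ) * Δbad + εK)) with hc₂def
  have hsumsub : ∀ π, ∑ k ∈ Finset.Icc 1 K, (Δhat k π - Δ π)
      = (∑ k ∈ Finset.Icc 1 K, Δhat k π) - (K : ℝ) * Δ π := by
    intro π
    rw [Finset.sum_sub_distrib, Finset.sum_const, Nat.card_Icc, nsmul_eq_mul]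
    push_cast
    ring
  have hlow : ∀ π ∈ G, c₁ * p₀ π ≤ w π := by
    intro π hπ
    rcases (hp₀_nonneg π).eq_or_lt with h | h
    · simp [hw, ← h]
    · have herr' := abs_le.1 (herr π h)
      rw [hsumsub π] at herr'
      have hKτ : (K : ℝ) * τgood ≤ (K : ℝ) * Δ π :=
        mul_le_mul_of_nonneg_left (hΔG π hπ) (Nat.cast_nonneg K)
      have h1 : (K : ℝ) * τgood - εK ≤ ∑ k ∈ Finset.Icc 1 K, Δhat k π := by
        linarith [herr'.1]
      calc c₁ * p₀ π = p₀ π * c₁ := mul_comm _ _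
        _ ≤ w π := mul_le_mul_of_nonneg_left
            (Real.exp_le_exp.2 (mul_le_mul_of_nonneg_left h1 hη.le)) h.le
  have hhigh : ∀ π ∉ G, w π ≤ c₂ * p₀ π := by
    intro π hπ
    rcases (hp₀_nonneg π).eq_or_lt with h | h
    · simp [hw, ← h]
    · have herr' := abs_le.1 (herr π h)
      rw [hsumsub π] at herr'
      have hKb : (K : ℝ) * Δ π ≤ (K : ℝ) * Δbad :=
        mul_le_mul_of_nonneg_left (hΔGc π hπ) (Nat.cast_nonneg K)
      have h1 : (∑ k ∈ Finset.Icc 1 K, Δhat k π) ≤ (K : ℝ) * Δbad + εK := by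
        linarith [herr'.2]
      calc w π ≤ p₀ π * c₂ := mul_le_mul_of_nonneg_left
            (Real.exp_le_exp.2 (mul_le_mul_of_nonneg_left h1 hη.le)) h.le
        _ = c₂ * p₀ π := mul_comm _ _
  have hρeq : ρK = (c₂ * ∑' π : ↥Gᶜ, p₀ π) / (c₁ * ∑' π : G, p₀ π) := by
    rw [hρK, mul_div_mul_comm, hc₁def, hc₂def, ← Real.exp_sub]
    rw [mul_comm]
    congr 2
    rw [hγ]
    ring
  exact aux_ratio p₀ w hp₀_nonneg hp₀s hw0 hws _ rfl hZ1 G hG c₁ c₂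
    (Real.exp_pos _) (Real.exp_pos _).le hlow hhigh pK hpK ρK hρeq
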